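/- Let (g_n)_{n≥1} be a sequence in L¹[0,1] with ‖g_n‖₁ = 1 for all n and pairwise disjoint supports. For t ∈ (1,2), let C_t := { s₁(t−1)g₁ + Σ_{n≥2} s_n g_n : s_n ≥ 0 for all n, Σ_{n≥1} s_n = 1 } and define T : C_t → C_t by T( s₁(t−1)g₁ + Σ_{n≥2} s_n g_n ) = Σ_{n≥1} s_n g_{n+1}. Then T is well defined (maps C_t into C_t), T is affine, and T has no fixed point in C_t. -/

import Mathlib

/-!
The normalised, disjointly supported `g n` admit biorthogonal functionals `f ↦ ∫ sign (g k) * f`,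
so the coefficients of a convergent series `∑ cₙ gₙ` can be read off. A fixed point
`∑ sₙ gₙ₊₁ = (t - 1) s₀ g₀ + ∑ sₙ₊₁ gₙ₊₁` would therefore satisfy `(t - 1) s₀ = 0` and
`sₙ₊₁ = sₙ`, forcing `s = 0` against `∑ sₙ = 1`. Well-definedness and affinity only use that
`s ↦ ∑ sₙ vₙ` is linear on summable sequences when `‖vₙ‖` is bounded.
-/

open MeasureTheory Filter Topology

/-- Lebesgue measure on `[0,1]`. -/
noncomputable def μ01 : Measure ℝ := volume.restrict (Set.Icc 0 1)

instance : IsFiniteMeasure μ01 := by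
  constructor
  simp [μ01, Real.volume_Icc]

/-- The set `C_t = { s₁(t-1)g₁ + Σ_{n≥2} s_n g_n : s_n ≥ 0, Σ s_n = 1 }` (here the sequence
`g` is indexed from `0`, so `g 0` plays the role of `g₁`). -/
noncomputable def Ct (g : ℕ → Lp ℝ 1 μ01) (t : ℝ) : Set (Lp ℝ 1 μ01) :=
  {f | ∃ s : ℕ → ℝ, (∀ n, 0 ≤ s n) ∧ (∑' n, s n) = 1 ∧
    f = ((t - 1) * s 0) • g 0 + ∑' n : ℕ, s (n + 1) • g (n + 1)}

open scoped ENNReal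

lemma measurable_coe_sign : Measurable (fun x : ℝ => (SignType.sign x : ℝ)) := by
  refine Monotone.measurable fun a b hab => ?_
  simp only [sign_apply]
  split_ifs <;> norm_num <;> linarith

lemma abs_coe_sign_le_one (x : ℝ) : |(SignType.sign x : ℝ)| ≤ 1 := by
  rcases lt_trichotomy x 0 with h | rfl | h <;> simp [sign_neg, sign_pos, *]

namespace MeasureTheory.Lp

variable {α : Type*} [MeasurableSpace α] {μ : Measure α} {p : ℝ≥0∞}

noncomputable def sign (u : Lp ℝ p μ) : Lp ℝ ∞ μ :=
  MemLp.toLp (fun x => (SignType.sign (u x) : ℝ)) <|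
    memLp_top_of_bound
      (measurable_coe_sign.comp (Lp.stronglyMeasurable u).measurable).aestronglyMeasurable 1
      (.of_forall fun x => by simpa using abs_coe_sign_le_one (u x))

lemma coeFn_sign (u : Lp ℝ p μ) : sign u =ᵐ[μ] fun x => (SignType.sign (u x) : ℝ) :=
  MemLp.coeFn_toLp _

end MeasureTheory.Lp

namespace MeasureTheory.L1

variable {α : Type*} [MeasurableSpace α] {μ : Measure α}

noncomputable def signFunctional (u : Lp ℝ 1 μ) : Lp ℝ 1 μ →L[ℝ] ℝ :=
  (ContinuousLinearMap.mul ℝ ℝ).lpPairing μ ∞ 1 (Lp.sign u)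

lemma signFunctional_apply (u f : Lp ℝ 1 μ) :
    signFunctional u f = ∫ x, SignType.sign (u x) * f x ∂μ := by
  rw [signFunctional, ContinuousLinearMap.lpPairing_eq_integral]
  refine integral_congr_ae ?_
  filter_upwards [Lp.coeFn_sign u] with x hx
  simp [hx]

lemma signFunctional_self (u : Lp ℝ 1 μ) : signFunctional u u = ‖u‖ := by
  simp [signFunctional_apply, sign_mul_self, L1.norm_eq_integral_norm]

lemma signFunctional_eq_zero_of_ae_disjoint {u v : Lp ℝ 1 μ}
    (h : ∀ᵐ x ∂μ, u x = 0 ∨ v x = 0) : signFunctional u v = 0 := by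
  rw [signFunctional_apply]
  refine integral_eq_zero_of_ae ?_
  filter_upwards [h] with x hx
  rcases hx with hx | hx <;> simp [hx]

lemma signFunctional_apply_of_pairwise_disjoint {ι : Type*} [DecidableEq ι] {g : ι → Lp ℝ 1 μ}
    (hnorm : ∀ i, ‖g i‖ = 1)
    (hdisj : ∀ i j, i ≠ j → ∀ᵐ x ∂μ, g i x = 0 ∨ g j x = 0) (i j : ι) :
    signFunctional (g i) (g j) = if j = i then 1 else 0 := by
  split_ifs with hji
  · rw [hji, signFunctional_self, hnorm]
  · exact signFunctional_eq_zero_of_ae_disjoint (hdisj i j (Ne.symm hji))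

end MeasureTheory.L1

lemma Summable.of_tsum_ne_zero {α β : Type*} [AddCommMonoid α] [TopologicalSpace α] {f : β → α}
    (h : ∑' b, f b ≠ 0) : Summable f :=
  by_contra fun hf => h (tsum_eq_zero_of_not_summable hf)

lemma tsum_convexComb_eq_one {s r : ℕ → ℝ} (hs : ∑' n, s n = 1) (hr : ∑' n, r n = 1) (l : ℝ) :
    ∑' n, (l * s n + (1 - l) * r n) = 1 := by
  rw [((Summable.of_tsum_ne_zero (by simp [hs])).mul_left l).tsum_add
    ((Summable.of_tsum_ne_zero (by simp [hr])).mul_left (1 - l)), tsum_mul_left, tsum_mul_left,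
    hs, hr]
  ring

section NormedSpace

variable {E : Type*} [NormedAddCommGroup E] [NormedSpace ℝ E]

lemma summable_smul_of_norm_le [CompleteSpace E] {ι : Type*} {v : ι → E} {C : ℝ}
    (hv : ∀ i, ‖v i‖ ≤ C) {s : ι → ℝ} (hs : Summable s) : Summable fun i => s i • v i :=
  (hs.abs.mul_right C).of_norm_bounded fun i => by
    rw [norm_smul, Real.norm_eq_abs]
    exact mul_le_mul_of_nonneg_left (hv i) (abs_nonneg _)

lemma smul_tsum_add_smul_tsum {ι : Type*} {w : ι → E} {s r : ι → ℝ}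
    (hs : Summable fun i => s i • w i) (hr : Summable fun i => r i • w i) (a b : ℝ) :
    a • ∑' i, s i • w i + b • ∑' i, r i • w i = ∑' i, (a * s i + b * r i) • w i := by
  rw [← hs.tsum_const_smul a, ← hr.tsum_const_smul b,
    ← (hs.const_smul a).tsum_add (hr.const_smul b)]
  simp only [add_smul, mul_smul]

lemma ContinuousLinearMap.map_tsum_smul (φ : E →L[ℝ] ℝ) {ι : Type*} {w : ι → E} {s : ι → ℝ}
    (hs : Summable fun i => s i • w i) : φ (∑' i, s i • w i) = ∑' i, s i * φ (w i) := by
  simp [φ.map_tsum hs]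

variable [CompleteSpace E] {v : ℕ → E} {C : ℝ}

lemma smul_ctParam_add_smul_ctParam (hv : ∀ n, ‖v n‖ ≤ C) {s r : ℕ → ℝ} (hs : Summable s)
    (hr : Summable r) (t a b : ℝ) :
    a • (((t - 1) * s 0) • v 0 + ∑' n, s (n + 1) • v (n + 1)) +
        b • (((t - 1) * r 0) • v 0 + ∑' n, r (n + 1) • v (n + 1)) =
      ((t - 1) * (a * s 0 + b * r 0)) • v 0 +
        ∑' n, (a * s (n + 1) + b * r (n + 1)) • v (n + 1) := by
  have hv' (n : ℕ) : ‖v (n + 1)‖ ≤ C := hv (n + 1)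
  rw [← smul_tsum_add_smul_tsum (summable_smul_of_norm_le hv' ((summable_nat_add_iff 1).2 hs))
    (summable_smul_of_norm_le hv' ((summable_nat_add_iff 1).2 hr))]
  module

lemma ctParam_ne_shift (hv : ∀ n, ‖v n‖ ≤ C) (φ : ℕ → E →L[ℝ] ℝ)
    (hφ : ∀ k n, φ k (v n) = if n = k then 1 else 0) {t : ℝ} (ht : t ≠ 1) {s : ℕ → ℝ}
    (hs : ∑' n, s n = 1) :
    ((t - 1) * s 0) • v 0 + ∑' n, s (n + 1) • v (n + 1) ≠ ∑' n, s n • v (n + 1) := by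
  intro h
  have hsum : Summable s := .of_tsum_ne_zero (by simp [hs])
  have hP := summable_smul_of_norm_le (fun n => hv (n + 1)) ((summable_nat_add_iff 1).2 hsum)
  have hQ := summable_smul_of_norm_le (fun n => hv (n + 1)) hsum
  have coord := fun k => congrArg (φ k) h
  simp only [map_add, map_smul, (φ _).map_tsum_smul hP, (φ _).map_tsum_smul hQ, hφ] at coord
  have hs0 : s 0 = 0 := by simpa [sub_ne_zero.2 ht] using coord 0
  have hstep (k : ℕ) : s (k + 1) = s k := by simpa using coord (k + 1)
  have hzero (n : ℕ) : s n = 0 := by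
    induction n with
    | zero => exact hs0
    | succ k ih => rw [hstep, ih]
  simp [hzero] at hs

end NormedSpace

lemma tsum_smul_succ_mem_Ct {g : ℕ → Lp ℝ 1 μ01} {s : ℕ → ℝ} (hs0 : ∀ n, 0 ≤ s n)
    (hs1 : ∑' n, s n = 1) (t : ℝ) : ∑' n, s n • g (n + 1) ∈ Ct g t := by
  have hs : Summable s := .of_tsum_ne_zero (by simp [hs1])
  refine ⟨fun n => Nat.casesOn n 0 s, fun n => ?_, ?_, by simp⟩
  · cases n
    exacts [le_rfl, hs0 _]
  · rw [((summable_nat_add_iff 1).1 hs).tsum_eq_zero_add]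
    simpa using hs1

/-- The shift map `T(s₁(t-1)g₁ + Σ_{n≥2} s_n g_n) = Σ_{n≥1} s_n g_{n+1}` is well defined
(maps `C_t` into `C_t`), affine, and fixed point free on `C_t`. -/
theorem shift_map_affine_no_fixedPoint
    (g : ℕ → Lp ℝ 1 μ01) (hnorm : ∀ n, ‖g n‖ = 1)
    (hdisj : ∀ m n : ℕ, m ≠ n → ∀ᵐ x ∂μ01, (g m : ℝ → ℝ) x = 0 ∨ (g n : ℝ → ℝ) x = 0)
    (t : ℝ) (ht : t ∈ Set.Ioo (1 : ℝ) 2)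
    (T : Lp ℝ 1 μ01 → Lp ℝ 1 μ01)
    (hT : ∀ s : ℕ → ℝ, (∀ n, 0 ≤ s n) → (∑' n, s n) = 1 →
      T (((t - 1) * s 0) • g 0 + ∑' n : ℕ, s (n + 1) • g (n + 1)) =
        ∑' n : ℕ, s n • g (n + 1)) :
    Set.MapsTo T (Ct g t) (Ct g t) ∧
    (∀ f ∈ Ct g t, ∀ h ∈ Ct g t, ∀ l : ℝ, 0 ≤ l → l ≤ 1 →
      T (l • f + (1 - l) • h) = l • T f + (1 - l) • T h) ∧
    (∀ f ∈ Ct g t, T f ≠ f) := by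
  have hg : ∀ n, ‖g n‖ ≤ 1 := fun n => (hnorm n).le
  refine ⟨?mapsTo, ?affine, ?noFixedPoint⟩
  · rintro _ ⟨s, hs0, hs1, rfl⟩
    rw [hT s hs0 hs1]
    exact tsum_smul_succ_mem_Ct hs0 hs1 t
  · rintro _ ⟨s, hs0, hs1, rfl⟩ _ ⟨r, hr0, hr1, rfl⟩ l hl0 hl1
    have hs : Summable s := .of_tsum_ne_zero (by simp [hs1])
    have hr : Summable r := .of_tsum_ne_zero (by simp [hr1])
    have hq0 (n : ℕ) : 0 ≤ l * s n + (1 - l) * r n :=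
      add_nonneg (mul_nonneg hl0 (hs0 n)) (mul_nonneg (sub_nonneg.2 hl1) (hr0 n))
    have hg' (n : ℕ) : ‖g (n + 1)‖ ≤ 1 := hg (n + 1)
    rw [smul_ctParam_add_smul_ctParam hg hs hr, hT _ hq0 (tsum_convexComb_eq_one hs1 hr1 l),
      hT s hs0 hs1, hT r hr0 hr1, smul_tsum_add_smul_tsum (summable_smul_of_norm_le hg' hs)
      (summable_smul_of_norm_le hg' hr)]
  · rintro _ ⟨s, hs0, hs1, rfl⟩ hfix
    rw [hT s hs0 hs1] at hfix
    exact ctParam_ne_shift hg (fun k => L1.signFunctional (g k))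
      (L1.signFunctional_apply_of_pairwise_disjoint hnorm hdisj) ht.1.ne' hs1 hfix.symm
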